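/- For every X ∈ F, ‖D(X)‖_F² ≤ N(X) + (1/2) M₁² n³. -/

import Mathlib

set_option autoImplicit false

open Matrix Set Filter

attribute [local instance] Matrix.normedAddCommGroup Matrix.normedSpace

namespace BoxSDP

open scoped Classical

/-- Trace inner product `⟨A|B⟩ = Trace(Aᵀ B)`. -/
noncomputable def mip {m k : Type*} [Fintype m] [Fintype k]
    (A B : Matrix m k ℝ) : ℝ :=
  (Aᵀ * B).trace

/-- Frobenius norm `‖A‖_F = √⟨A|A⟩`. -/
noncomputable def fnorm {m k : Type*} [Fintype m] [Fintype k]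
    (A : Matrix m k ℝ) : ℝ :=
  Real.sqrt (mip A A)

/-- The feasible set `F = {X : O ⪯ X ⪯ I}` (membership forces symmetry). -/
def Feas (n : ℕ) : Set (Matrix (Fin n) (Fin n) ℝ) :=
  {X | X.PosSemidef ∧ (1 - X).PosSemidef}

/-- Square root of a positive semidefinite matrix (junk value `0` otherwise);
agrees with `A^{1/2} = Q K^{1/2} Qᵀ` on positive semidefinite matrices. -/
noncomputable def psqrt {m : Type*} [Fintype m] [DecidableEq m]
    (A : Matrix m m ℝ) : Matrix m m ℝ :=
  if h : A.PosSemidef then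
    (h.1.eigenvectorUnitary : Matrix m m ℝ) * diagonal (Real.sqrt ∘ h.1.eigenvalues) *
      (star h.1.eigenvectorUnitary : Matrix m m ℝ)
  else 0

/-- Fourth root `A^{1/4}` of a positive semidefinite matrix. -/
noncomputable def proot4 {m : Type*} [Fintype m] [DecidableEq m]
    (A : Matrix m m ℝ) : Matrix m m ℝ :=
  psqrt (psqrt A)

/-- The 2-norm of a symmetric matrix: its largest absolute eigenvalue. -/
noncomputable def norm2 {m : Type*} [Fintype m] [DecidableEq m]
    (A : Matrix m m ℝ) : ℝ :=
  if h : A.IsHermitian then sSup (Set.range fun i => |h.eigenvalues i|) else 0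

/-- The linear functional `H ↦ ⟨G|H⟩`, as a continuous linear map; a function
`f` has gradient matrix `G` at `X` iff `HasFDerivAt f (gradCLM G) X`. -/
noncomputable def gradCLM {n : ℕ} (G : Matrix (Fin n) (Fin n) ℝ) :
    Matrix (Fin n) (Fin n) ℝ →L[ℝ] ℝ :=
  LinearMap.toContinuousLinearMap
    { toFun := fun H => mip G H
      map_add' := fun x y => by
        simp [mip, Matrix.mul_add]
      map_smul' := fun c x => by
        simp [mip, Matrix.mul_smul] }

/-- The Hessian bilinear form `⟨A | ∇²f(X) | B⟩` induced by the derivative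
`hessOp` of the gradient map. -/
noncomputable def hform {n : ℕ}
    (hessOp : Matrix (Fin n) (Fin n) ℝ →L[ℝ] Matrix (Fin n) (Fin n) ℝ)
    (A B : Matrix (Fin n) (Fin n) ℝ) : ℝ :=
  mip A (hessOp B)

/-- `underline-f`: the minimum of `⟨G | Y − X̂⟩` over `Y ∈ F`. -/
noncomputable def underf {n : ℕ} (G Xh : Matrix (Fin n) (Fin n) ℝ) : ℝ :=
  sInf ((fun Y => mip G (Y - Xh)) '' Feas n)

/-- First-order optimality condition at `Xs` for gradient matrix `G`. -/
def FirstOrderOpt {n : ℕ} (G Xs : Matrix (Fin n) (Fin n) ℝ) : Prop :=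
  ∀ X ∈ Feas n, 0 ≤ mip G (X - Xs)

/-- A fixed eigenvalue decomposition `G = P Γ Pᵀ` of a symmetric matrix `G`,
with eigenvalues in descending order, split into the block `Pp, gp` of
positive eigenvalues and the block `Pm, gm` of nonpositive eigenvalues. -/
structure SpecDecomp (n : ℕ) (G : Matrix (Fin n) (Fin n) ℝ) where
  np : ℕ
  nm : ℕ
  hdim : np + nm = n
  Pp : Matrix (Fin n) (Fin np) ℝ
  Pm : Matrix (Fin n) (Fin nm) ℝ
  gp : Fin np → ℝ
  gm : Fin nm → ℝ
  hgp_pos : ∀ i, 0 < gp i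
  hgm_nonpos : ∀ j, gm j ≤ 0
  hgp_anti : ∀ i j : Fin np, i ≤ j → gp j ≤ gp i
  hgm_anti : ∀ i j : Fin nm, i ≤ j → gm j ≤ gm i
  hPp_orth : Ppᵀ * Pp = 1
  hPm_orth : Pmᵀ * Pm = 1
  hPpPm : Ppᵀ * Pm = 0
  hPPT : Pp * Ppᵀ + Pm * Pmᵀ = 1
  hG : G = Pp * Matrix.diagonal gp * Ppᵀ + Pm * Matrix.diagonal gm * Pmᵀ

namespace SpecDecomp

variable {n : ℕ} {G : Matrix (Fin n) (Fin n) ℝ}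

/-- `V₊(X) = P₊ᵀ X P₊`. -/
def Vp (sd : SpecDecomp n G) (X : Matrix (Fin n) (Fin n) ℝ) :
    Matrix (Fin sd.np) (Fin sd.np) ℝ :=
  sd.Ppᵀ * X * sd.Pp

/-- `V₋(X) = P₋ᵀ (I − X) P₋`. -/
def Vm (sd : SpecDecomp n G) (X : Matrix (Fin n) (Fin n) ℝ) :
    Matrix (Fin sd.nm) (Fin sd.nm) ℝ :=
  sd.Pmᵀ * (1 - X) * sd.Pm

/-- The search direction `D(X) = P M Pᵀ` with blocks
`M₁₁ = V₊^{1/2} Γ₊ V₊^{1/2}`, `M₁₂ = γ_max P₊ᵀ X P₋`,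
`M₂₁ = γ_max P₋ᵀ X P₊`, `M₂₂ = V₋^{1/2} Γ₋ V₋^{1/2}`. -/
noncomputable def Dmat (sd : SpecDecomp n G) (X : Matrix (Fin n) (Fin n) ℝ) :
    Matrix (Fin n) (Fin n) ℝ :=
  sd.Pp * (psqrt (sd.Vp X) * Matrix.diagonal sd.gp * psqrt (sd.Vp X)) * sd.Ppᵀ
    + norm2 G • (sd.Pp * (sd.Ppᵀ * X * sd.Pm) * sd.Pmᵀ)
    + norm2 G • (sd.Pm * (sd.Pmᵀ * X * sd.Pp) * sd.Ppᵀ)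
    + sd.Pm * (psqrt (sd.Vm X) * Matrix.diagonal sd.gm * psqrt (sd.Vm X)) * sd.Pmᵀ

/-- `N(X) = ⟨G | D(X)⟩`. -/
noncomputable def Nval (sd : SpecDecomp n G) (X : Matrix (Fin n) (Fin n) ℝ) : ℝ :=
  mip G (sd.Dmat X)

end SpecDecomp

/-!
Writing `P = [P₊ P₋]`, both `D(X)` and `∇f(X)` are conjugates `P M Pᵀ` of block matrices, so
`‖D(X)‖_F²` and `N(X)` split blockwise. A diagonal block is `S Γ S` with `S = V^{1/2}`,
`O ⪯ V ⪯ I` and `±Γ ⪰ O`, so `S − S² ⪰ O`. For `W ⪰ O`,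
`⟨W|SWS⟩ − ‖SWS‖_F² = tr(WS²W(S − S²)) + tr(W(S − S²)WS) ≥ 0`, and both sides are even in `W`.
The off-diagonal blocks are `γ_max Pᵢᵀ X Pⱼ`, whose entries have modulus at most `1` since
`O ⪯ X ⪯ I`; they contribute at most `2 γ_max² n₊ n₋ ≤ M₁² n² / 2 ≤ M₁² n³ / 2`.
-/

section TraceInner

variable {ι m k : Type*} [Fintype ι] [Fintype m] [Fintype k]

lemma mip_eq_sum (A B : Matrix m k ℝ) : mip A B = ∑ i, ∑ j, A i j * B i j := by
  rw [mip, trace, Finset.sum_comm]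
  simp [mul_apply]

lemma mip_self_nonneg (A : Matrix m k ℝ) : 0 ≤ mip A A := by
  rw [mip_eq_sum]
  exact Finset.sum_nonneg fun i _ => Finset.sum_nonneg fun j _ => mul_self_nonneg _

lemma mip_smul_smul (a b : ℝ) (A B : Matrix m k ℝ) : mip (a • A) (b • B) = a * b * mip A B := by
  simp only [mip_eq_sum, Matrix.smul_apply, smul_eq_mul, Finset.mul_sum]
  exact Finset.sum_congr rfl fun i _ => Finset.sum_congr rfl fun j _ => by ring

lemma mip_neg_neg (A B : Matrix m k ℝ) : mip (-A) (-B) = mip A B := by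
  simp [mip_eq_sum]

lemma mip_zero_left (B : Matrix m k ℝ) : mip 0 B = 0 := by
  simp [mip_eq_sum]

lemma mip_fromBlocks {l o : Type*} [Fintype l] [Fintype o]
    (A A' : Matrix m l ℝ) (B B' : Matrix m o ℝ) (C C' : Matrix k l ℝ) (D D' : Matrix k o ℝ) :
    mip (fromBlocks A B C D) (fromBlocks A' B' C' D') =
      mip A A' + mip B B' + mip C C' + mip D D' := by
  simp only [mip_eq_sum, Fintype.sum_sum_type, fromBlocks_apply₁₁, fromBlocks_apply₁₂,
    fromBlocks_apply₂₁, fromBlocks_apply₂₂, Finset.sum_add_distrib]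
  ring

lemma mip_conj_of_transpose_mul_self [DecidableEq m] {P : Matrix ι m ℝ} (hP : Pᵀ * P = 1)
    (A B : Matrix m m ℝ) :
    mip (P * A * Pᵀ) (P * B * Pᵀ) = mip A B := by
  simp only [mip, transpose_mul, transpose_transpose, Matrix.mul_assoc]
  rw [trace_mul_comm, Matrix.mul_assoc, ← Matrix.mul_assoc Pᵀ P, hP, Matrix.one_mul]
  simp only [← Matrix.mul_assoc]
  rw [Matrix.mul_assoc, hP, Matrix.mul_one]

lemma mip_self_le_card_mul_card {B : Matrix m k ℝ} (hB : ∀ i j, |B i j| ≤ 1) :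
    mip B B ≤ Fintype.card m * Fintype.card k := by
  rw [mip_eq_sum]
  calc ∑ i, ∑ j, B i j * B i j ≤ ∑ _i : m, ∑ _j : k, (1 : ℝ) := by
        gcongr with i _ j _
        rw [← abs_mul_abs_self]
        exact mul_le_one₀ (hB i j) (abs_nonneg _) (hB i j)
    _ = Fintype.card m * Fintype.card k := by simp

lemma _root_.Matrix.PosSemidef.trace_mul_nonneg {A B : Matrix m m ℝ} (hA : A.PosSemidef)
    (hB : B.PosSemidef) : 0 ≤ (A * B).trace := by
  -- `tr(AB)` is the sum of the entries of the Schur product `A ⊙ Bᵀ`, which is semidefinite.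
  have h : 0 ≤ (fun _ => (1 : ℝ)) ⬝ᵥ (A ⊙ Bᵀ) *ᵥ (fun _ => 1) := by
    simpa using (hA.hadamard hB.transpose).dotProduct_mulVec_nonneg (fun _ => 1)
  simpa [trace, mul_apply, dotProduct, mulVec] using h

lemma mip_conj_self_le {S W : Matrix m m ℝ} (hS : S.PosSemidef) (hSS : (S - S * S).PosSemidef)
    (hW : W.PosSemidef) : mip (S * W * S) (S * W * S) ≤ mip W (S * W * S) := by
  have hST : Sᵀ = S := hS.1
  have hWT : Wᵀ = W := hW.1
  have hWSSW : (W * (S * S) * W).PosSemidef := by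
    simpa [hST, hWT] using (posSemidef_conjTranspose_mul_self S).conjTranspose_mul_mul_same W
  have hWDW : (W * (S - S * S) * W).PosSemidef := by
    simpa [hWT] using hSS.conjTranspose_mul_mul_same W
  have hsplit : W * (S * S) * W * (S - S * S) + W * (S - S * S) * W * S =
      W * S * W * S - W * (S * S) * W * (S * S) := by
    noncomm_ring
  have h := add_nonneg (hWSSW.trace_mul_nonneg hSS) (hWDW.trace_mul_nonneg hS)
  rw [← trace_add, hsplit, trace_sub, sub_nonneg] at h
  have hlhs : mip (S * W * S) (S * W * S) = (W * (S * S) * W * (S * S)).trace := by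
    rw [mip, transpose_mul, transpose_mul, hST, hWT,
      show S * (W * S) * (S * W * S) = S * (W * (S * S) * W * S) by noncomm_ring, trace_mul_comm]
    congr 1
    noncomm_ring
  have hrhs : mip W (S * W * S) = (W * S * W * S).trace := by
    rw [mip, hWT]
    simp only [Matrix.mul_assoc]
  rwa [hlhs, hrhs]

end TraceInner

section Sqrt

variable {m : Type*} [Fintype m] [DecidableEq m] {A : Matrix m m ℝ}

lemma _root_.Matrix.PosSemidef.eigenvalues_le_one (hA : A.PosSemidef) (h1A : (1 - A).PosSemidef)
    (i : m) : hA.1.eigenvalues i ≤ 1 := by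
  set v := hA.1.eigenvectorBasis i
  have hv : star ⇑v ⬝ᵥ ⇑v = 1 := by
    rw [dotProduct_comm, ← EuclideanSpace.inner_eq_star_dotProduct, real_inner_self_eq_norm_sq,
      hA.1.eigenvectorBasis.orthonormal.1 i, one_pow]
  have h := h1A.dotProduct_mulVec_nonneg v
  rw [sub_mulVec, one_mulVec, dotProduct_sub, hv, sub_nonneg] at h
  simpa [hA.1.eigenvalues_eq] using h

lemma psqrt_eq (hA : A.PosSemidef) :
    psqrt A = (hA.1.eigenvectorUnitary : Matrix m m ℝ) *
      diagonal (Real.sqrt ∘ hA.1.eigenvalues) * (star hA.1.eigenvectorUnitary : Matrix m m ℝ) :=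
  dif_pos hA

lemma _root_.Matrix.PosSemidef.eq_eigenvectorUnitary_mul_diagonal (hA : A.PosSemidef) :
    A = (hA.1.eigenvectorUnitary : Matrix m m ℝ) * diagonal hA.1.eigenvalues *
      (star hA.1.eigenvectorUnitary : Matrix m m ℝ) := by
  simpa [RCLike.ofReal_real_eq_id] using hA.1.spectral_theorem

lemma posSemidef_mul_diagonal_mul_star (U : Matrix m m ℝ) {d : m → ℝ} (hd : ∀ i, 0 ≤ d i) :
    (U * diagonal d * star U).PosSemidef := by
  rw [star_eq_conjTranspose]
  exact (posSemidef_diagonal_iff.mpr hd).mul_mul_conjTranspose_same U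

lemma posSemidef_psqrt (hA : A.PosSemidef) : (psqrt A).PosSemidef := by
  rw [psqrt_eq hA]
  exact posSemidef_mul_diagonal_mul_star _ fun i => Real.sqrt_nonneg _

lemma psqrt_mul_self (hA : A.PosSemidef) : psqrt A * psqrt A = A := by
  set U : Matrix m m ℝ := ↑hA.1.eigenvectorUnitary
  set e := hA.1.eigenvalues
  have hU : star U * U = 1 := Unitary.coe_star_mul_self _
  have hA_eq : A = U * diagonal e * star U := hA.eq_eigenvectorUnitary_mul_diagonal
  have hsqrt : ∀ i, √(e i) * √(e i) = e i := fun i => Real.mul_self_sqrt (hA.eigenvalues_nonneg i)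
  calc psqrt A * psqrt A
      = U * (diagonal (Real.sqrt ∘ e) * (star U * U) * diagonal (Real.sqrt ∘ e)) * star U := by
        simp only [psqrt_eq hA, Matrix.mul_assoc]; rfl
    _ = A := by
        rw [hU, Matrix.mul_one, diagonal_mul_diagonal, hA_eq]
        simp only [Function.comp_apply, hsqrt]

lemma posSemidef_psqrt_sub_self (hA : A.PosSemidef) (h1A : (1 - A).PosSemidef) :
    (psqrt A - A).PosSemidef := by
  set U : Matrix m m ℝ := ↑hA.1.eigenvectorUnitary
  set e := hA.1.eigenvalues
  have hA_eq : A = U * diagonal e * star U := hA.eq_eigenvectorUnitary_mul_diagonal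
  have h : psqrt A - A = U * diagonal (fun i => √(e i) - e i) * star U := by
    have hsqrt : psqrt A = U * diagonal (Real.sqrt ∘ e) * star U := psqrt_eq hA
    rw [hsqrt]
    nth_rw 1 [hA_eq]
    rw [← Matrix.sub_mul, ← Matrix.mul_sub, ← diagonal_sub]
    rfl
  rw [h]
  refine posSemidef_mul_diagonal_mul_star _ fun i => ?_
  have h0 : 0 ≤ e i := hA.eigenvalues_nonneg i
  have h1 : e i ≤ 1 := hA.eigenvalues_le_one h1A i
  nlinarith [Real.sq_sqrt h0, Real.sqrt_nonneg (e i)]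

lemma mip_psqrt_conj_self_le {V W : Matrix m m ℝ} (hV : V.PosSemidef) (h1V : (1 - V).PosSemidef)
    (hW : W.PosSemidef) :
    mip (psqrt V * W * psqrt V) (psqrt V * W * psqrt V) ≤ mip W (psqrt V * W * psqrt V) := by
  refine mip_conj_self_le (posSemidef_psqrt hV) ?_ hW
  rw [psqrt_mul_self hV]
  exact posSemidef_psqrt_sub_self hV h1V

lemma mip_psqrt_conj_self_le_of_neg {V W : Matrix m m ℝ} (hV : V.PosSemidef)
    (h1V : (1 - V).PosSemidef) (hW : (-W).PosSemidef) :
    mip (psqrt V * W * psqrt V) (psqrt V * W * psqrt V) ≤ mip W (psqrt V * W * psqrt V) := by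
  have h := mip_psqrt_conj_self_le hV h1V hW
  simpa only [Matrix.mul_neg, Matrix.neg_mul, neg_neg, mip_neg_neg] using h

end Sqrt

section UnitInterval

variable {ι : Type*} [Fintype ι] [DecidableEq ι] {X : Matrix ι ι ℝ}

lemma abs_dotProduct_mulVec_le_one (hX : X.PosSemidef) (h1X : (1 - X).PosSemidef)
    {u v : ι → ℝ} (hu : u ⬝ᵥ u = 1) (hv : v ⬝ᵥ v = 1) : |u ⬝ᵥ X *ᵥ v| ≤ 1 := by
  have hquad (w : ι → ℝ) : 0 ≤ w ⬝ᵥ X *ᵥ w := by simpa using hX.dotProduct_mulVec_nonneg w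
  have hquad_le (w : ι → ℝ) (hw : w ⬝ᵥ w = 1) : w ⬝ᵥ X *ᵥ w ≤ 1 := by
    have h := h1X.dotProduct_mulVec_nonneg w
    rwa [star_trivial, sub_mulVec, one_mulVec, dotProduct_sub, hw, sub_nonneg] at h
  have hXT : Xᵀ = X := hX.1
  have hsymm : v ⬝ᵥ X *ᵥ u = u ⬝ᵥ X *ᵥ v := by
    rw [dotProduct_mulVec, ← mulVec_transpose, hXT, dotProduct_comm]
  have hsub := hquad (u - v)
  have hadd := hquad (u + v)
  simp only [mulVec_sub, mulVec_add, sub_dotProduct, dotProduct_sub, add_dotProduct,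
    dotProduct_add, hsymm] at hsub hadd
  rw [abs_le]
  constructor <;> linarith [hquad_le u hu, hquad_le v hv]

lemma abs_transpose_mul_mul_apply_le_one {m k : Type*} [Fintype m] [Fintype k]
    [DecidableEq m] [DecidableEq k] (hX : X.PosSemidef) (h1X : (1 - X).PosSemidef)
    {P : Matrix ι m ℝ} {Q : Matrix ι k ℝ} (hP : Pᵀ * P = 1) (hQ : Qᵀ * Q = 1) (i : m) (j : k) :
    |(Pᵀ * X * Q) i j| ≤ 1 := by
  have hPi : Pᵀ i ⬝ᵥ Pᵀ i = 1 := by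
    have h := congrFun (congrFun hP i) i
    rwa [mul_apply', one_apply_eq] at h
  have hQj : Qᵀ j ⬝ᵥ Qᵀ j = 1 := by
    have h := congrFun (congrFun hQ j) j
    rwa [mul_apply', one_apply_eq] at h
  have hentry : (Pᵀ * X * Q) i j = Pᵀ i ⬝ᵥ X *ᵥ Qᵀ j := by
    rw [mul_apply', dotProduct_mulVec]
    rfl
  rw [hentry]
  exact abs_dotProduct_mulVec_le_one hX h1X hPi hQj

end UnitInterval

lemma posSemidef_transpose_mul_mul {ι m : Type*} [Fintype ι] [Fintype m] {Y : Matrix ι ι ℝ}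
    (hY : Y.PosSemidef) (P : Matrix ι m ℝ) : (Pᵀ * Y * P).PosSemidef := by
  simpa using hY.conjTranspose_mul_mul_same P

lemma one_sub_transpose_mul_mul {ι m : Type*} [Fintype ι] [DecidableEq ι] [DecidableEq m]
    {P : Matrix ι m ℝ} (hP : Pᵀ * P = 1) (Y : Matrix ι ι ℝ) :
    1 - Pᵀ * Y * P = Pᵀ * (1 - Y) * P := by
  rw [Matrix.mul_sub, Matrix.mul_one, Matrix.sub_mul, hP]

lemma four_mul_mul_le_add_pow_three (p q : ℕ) : 4 * p * q ≤ (p + q) ^ 3 := by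
  have hsq : 4 * p * q ≤ (p + q) ^ 2 := by
    zify
    nlinarith [sq_nonneg ((p : ℤ) - q)]
  rcases Nat.eq_zero_or_pos (p + q) with h | h
  · simp_all
  · exact hsq.trans (Nat.pow_le_pow_right h (by norm_num))

lemma norm2_nonneg {m : Type*} [Fintype m] [DecidableEq m] (A : Matrix m m ℝ) : 0 ≤ norm2 A := by
  unfold norm2
  split
  · exact Real.sSup_nonneg (by rintro x ⟨i, rfl⟩; positivity)
  · exact le_rfl

lemma fromCols_mul_fromBlocks_mul_transpose_fromCols {ι m k : Type*} [Fintype m] [Fintype k]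
    (A : Matrix ι m ℝ) (B : Matrix ι k ℝ) (M₁₁ : Matrix m m ℝ) (M₁₂ : Matrix m k ℝ)
    (M₂₁ : Matrix k m ℝ) (M₂₂ : Matrix k k ℝ) :
    fromCols A B * fromBlocks M₁₁ M₁₂ M₂₁ M₂₂ * (fromCols A B)ᵀ =
      A * M₁₁ * Aᵀ + A * M₁₂ * Bᵀ + B * M₂₁ * Aᵀ + B * M₂₂ * Bᵀ := by
  rw [transpose_fromCols, fromCols_mul_fromBlocks, fromCols_mul_fromRows]
  simp only [Matrix.add_mul]
  abel

namespace SpecDecomp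

variable {n : ℕ} {G : Matrix (Fin n) (Fin n) ℝ} (sd : SpecDecomp n G)
  (X : Matrix (Fin n) (Fin n) ℝ)

def P : Matrix (Fin n) (Fin sd.np ⊕ Fin sd.nm) ℝ :=
  fromCols sd.Pp sd.Pm

noncomputable def Mmat : Matrix (Fin sd.np ⊕ Fin sd.nm) (Fin sd.np ⊕ Fin sd.nm) ℝ :=
  fromBlocks (psqrt (sd.Vp X) * diagonal sd.gp * psqrt (sd.Vp X))
    (norm2 G • (sd.Ppᵀ * X * sd.Pm)) (norm2 G • (sd.Pmᵀ * X * sd.Pp))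
    (psqrt (sd.Vm X) * diagonal sd.gm * psqrt (sd.Vm X))

lemma transpose_Pm_mul_Pp : sd.Pmᵀ * sd.Pp = 0 := by
  simpa using congrArg transpose sd.hPpPm

lemma transpose_P_mul_P : sd.Pᵀ * sd.P = 1 := by
  rw [P, transpose_fromCols, fromRows_mul_fromCols, sd.hPp_orth, sd.hPpPm, sd.transpose_Pm_mul_Pp,
    sd.hPm_orth, fromBlocks_one]

lemma eq_P_mul_fromBlocks_mul :
    G = sd.P * fromBlocks (diagonal sd.gp) 0 0 (diagonal sd.gm) * sd.Pᵀ := by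
  conv_lhs => rw [sd.hG]
  rw [P, fromCols_mul_fromBlocks_mul_transpose_fromCols]
  simp

lemma Dmat_eq : sd.Dmat X = sd.P * sd.Mmat X * sd.Pᵀ := by
  rw [P, Mmat, fromCols_mul_fromBlocks_mul_transpose_fromCols, Dmat]
  simp only [Matrix.mul_smul, Matrix.smul_mul]

lemma fnorm_Dmat_sq : fnorm (sd.Dmat X) ^ 2 = mip (sd.Mmat X) (sd.Mmat X) := by
  rw [fnorm, Real.sq_sqrt (mip_self_nonneg _), Dmat_eq,
    mip_conj_of_transpose_mul_self sd.transpose_P_mul_P]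

lemma Nval_eq :
    sd.Nval X = mip (fromBlocks (diagonal sd.gp) 0 0 (diagonal sd.gm)) (sd.Mmat X) := by
  rw [Nval, Dmat_eq, ← mip_conj_of_transpose_mul_self sd.transpose_P_mul_P,
    ← sd.eq_P_mul_fromBlocks_mul]

variable {X}

lemma mip_self_block₁₁_le (hX : X ∈ Feas n) :
    mip (psqrt (sd.Vp X) * diagonal sd.gp * psqrt (sd.Vp X))
        (psqrt (sd.Vp X) * diagonal sd.gp * psqrt (sd.Vp X)) ≤
      mip (diagonal sd.gp) (psqrt (sd.Vp X) * diagonal sd.gp * psqrt (sd.Vp X)) := by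
  refine mip_psqrt_conj_self_le (posSemidef_transpose_mul_mul hX.1 _) ?_
    (posSemidef_diagonal_iff.mpr fun i => (sd.hgp_pos i).le)
  rw [Vp, one_sub_transpose_mul_mul sd.hPp_orth]
  exact posSemidef_transpose_mul_mul hX.2 _

lemma mip_self_block₂₂_le (hX : X ∈ Feas n) :
    mip (psqrt (sd.Vm X) * diagonal sd.gm * psqrt (sd.Vm X))
        (psqrt (sd.Vm X) * diagonal sd.gm * psqrt (sd.Vm X)) ≤
      mip (diagonal sd.gm) (psqrt (sd.Vm X) * diagonal sd.gm * psqrt (sd.Vm X)) := by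
  refine mip_psqrt_conj_self_le_of_neg (posSemidef_transpose_mul_mul hX.2 _) ?_
    (by simpa using fun j => sd.hgm_nonpos j)
  rw [Vm, one_sub_transpose_mul_mul sd.hPm_orth, sub_sub_cancel]
  exact posSemidef_transpose_mul_mul hX.1 _

lemma mip_self_offDiag_le (hX : X ∈ Feas n) :
    mip (sd.Ppᵀ * X * sd.Pm) (sd.Ppᵀ * X * sd.Pm) +
      mip (sd.Pmᵀ * X * sd.Pp) (sd.Pmᵀ * X * sd.Pp) ≤ 1 / 2 * (n : ℝ) ^ 3 := by
  have h₁₂ := mip_self_le_card_mul_card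
    (abs_transpose_mul_mul_apply_le_one hX.1 hX.2 sd.hPp_orth sd.hPm_orth)
  have h₂₁ := mip_self_le_card_mul_card
    (abs_transpose_mul_mul_apply_le_one hX.1 hX.2 sd.hPm_orth sd.hPp_orth)
  have hcount : (4 * sd.np * sd.nm : ℝ) ≤ (n : ℝ) ^ 3 := by
    exact_mod_cast sd.hdim ▸ four_mul_mul_le_add_pow_three sd.np sd.nm
  simp only [Fintype.card_fin] at h₁₂ h₂₁
  linarith

end SpecDecomp

theorem fnorm_Dmat_sq_le_general {n : ℕ}
    (grad : Matrix (Fin n) (Fin n) ℝ → Matrix (Fin n) (Fin n) ℝ)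
    (M₁ : ℝ)
    (hM1 : IsGreatest {r : ℝ | ∃ X ∈ Feas n, r = norm2 (grad X)} M₁)
    (X : Matrix (Fin n) (Fin n) ℝ) (hX : X ∈ Feas n)
    (sd : SpecDecomp n (grad X)) :
    fnorm (sd.Dmat X) ^ 2 ≤ sd.Nval X + (1 / 2) * M₁ ^ 2 * (n : ℝ) ^ 3 := by
  have hγ : 0 ≤ norm2 (grad X) := norm2_nonneg _
  have hγM : norm2 (grad X) ^ 2 ≤ M₁ ^ 2 := pow_le_pow_left₀ hγ (hM1.2 ⟨X, hX, rfl⟩) 2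
  have hoff := mul_le_mul hγM (sd.mip_self_offDiag_le hX)
    (add_nonneg (mip_self_nonneg _) (mip_self_nonneg _)) (sq_nonneg M₁)
  rw [sd.fnorm_Dmat_sq, sd.Nval_eq, SpecDecomp.Mmat, mip_fromBlocks, mip_fromBlocks,
    mip_smul_smul, mip_smul_smul, mip_zero_left, mip_zero_left]
  linarith [sd.mip_self_block₁₁_le hX, sd.mip_self_block₂₂_le hX]

theorem fnorm_Dmat_sq_le {n : ℕ}
    (f : Matrix (Fin n) (Fin n) ℝ → ℝ)
    (grad : Matrix (Fin n) (Fin n) ℝ → Matrix (Fin n) (Fin n) ℝ)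
    (hgradsym : ∀ X ∈ Feas n, (grad X).IsSymm)
    (hgrad : ∀ X ∈ Feas n, HasFDerivAt f (gradCLM (grad X)) X)
    (M₁ : ℝ)
    (hM1 : IsGreatest {r : ℝ | ∃ X ∈ Feas n, r = norm2 (grad X)} M₁)
    (X : Matrix (Fin n) (Fin n) ℝ) (hX : X ∈ Feas n)
    (sd : SpecDecomp n (grad X)) :
    fnorm (sd.Dmat X) ^ 2 ≤ sd.Nval X + (1 / 2) * M₁ ^ 2 * (n : ℝ) ^ 3 :=
  fnorm_Dmat_sq_le_general grad M₁ hM1 X hX sd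

end BoxSDP
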